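/- Let n be an even integer with n ≥ 2, let t ≥ 1, and let 0 = l_0 < l_1 < l_2 < ⋯ < l_t be integers. Set m = l_t + 3n − 3 and let τ ∈ S_m be the product of the cycles (1, 2, …, l_1)(l_1+1, …, l_2)⋯(l_{t−1}+1, …, l_t−1, l_t). Then for every integer N with l_t ≤ N ≤ l_t + 3n − 3 there exists g ∈ C(n, m) such that g τ g⁻¹ equals the product of cycles (1, 2, …, l_1)(l_1+1, …, l_2)⋯(l_{t−1}+1, …, l_t−1, N). -/

import Mathlib

/-- The underlying function of the `n`-crossing permutation `π_j` over `{1, …, m}` (as a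
function on `ℕ`): it sends `j + k` to `j + n - 1 - k` for `0 ≤ k ≤ n - 1` and fixes all
other points. -/
def crossFun (n j i : ℕ) : ℕ :=
  if j ≤ i ∧ i < j + n then 2 * j + n - 1 - i else i

lemma crossFun_involutive (n j : ℕ) : Function.Involutive (crossFun n j) := by
  intro i
  unfold crossFun
  split_ifs <;> omega

/-- The `n`-crossing permutation `π_j`, viewed as a permutation of `ℕ` fixing every point
outside `{j, …, j + n - 1}`. -/
def crossPerm (n j : ℕ) : Equiv.Perm ℕ :=
  Function.Involutive.toPerm _ (crossFun_involutive n j)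

/-- `C n m` is the subgroup of the symmetric group `S_m` (realized as permutations of `ℕ`
supported on `{1, …, m}`) generated by the `n`-crossing permutations `π_1, …, π_{m-n+1}`. -/
def C (n m : ℕ) : Subgroup (Equiv.Perm ℕ) :=
  Subgroup.closure {σ | ∃ j, 1 ≤ j ∧ j ≤ m - n + 1 ∧ σ = crossPerm n j}

/-!
On `{j, …, j + n}` the product `π_{j+1} π_j` is the rotation `p ↦ j + (p - j + 2) mod (n + 1)`,
and it fixes every point below `j`. As `n + 1` is odd, its powers move `j` to any `j + r` with
`r ≤ n`; chaining such moves inside `{1, …, m}` carries `l_t` to any `N ≤ m` while fixing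
`1, …, l_t - 1`. Conjugating `τ` by such a `g` fixes every cycle but the last one, whose final
entry `l_t` becomes `N`.
-/

lemma crossPerm_apply (n j i : ℕ) :
    crossPerm n j i = if j ≤ i ∧ i < j + n then 2 * j + n - 1 - i else i := rfl

lemma crossPerm_mem_C {n m j : ℕ} (hj : 1 ≤ j) (hjm : j ≤ m - n + 1) :
    crossPerm n j ∈ C n m :=
  Subgroup.subset_closure ⟨j, hj, hjm, rfl⟩

def crossShift (n j : ℕ) : Equiv.Perm ℕ := crossPerm n (j + 1) * crossPerm n j

lemma crossShift_mem_C {n m j : ℕ} (hj : 1 ≤ j) (hjm : j + n ≤ m) :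
    crossShift n j ∈ C n m :=
  mul_mem (crossPerm_mem_C (by omega) (by omega)) (crossPerm_mem_C hj (by omega))

lemma crossShift_apply_of_mem {n j p : ℕ} (hjp : j ≤ p) (hpj : p ≤ j + n) :
    crossShift n j p = j + (p - j + 2) % (n + 1) := by
  rcases Nat.eq_zero_or_pos n with rfl | hn
  · rw [Nat.zero_add, Nat.mod_one]
    simp only [crossShift, Equiv.Perm.mul_apply, crossPerm_apply]
    split_ifs <;> omega
  have hmod : (p - j + 2) % (n + 1) =
      if p - j + 2 < n + 1 then p - j + 2 else p - j + 2 - (n + 1) := by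
    split_ifs with h
    · exact Nat.mod_eq_of_lt h
    · rw [Nat.mod_eq_sub_mod (by omega)]; exact Nat.mod_eq_of_lt (by omega)
  rw [hmod]
  simp only [crossShift, Equiv.Perm.mul_apply, crossPerm_apply]
  split_ifs <;> omega

lemma crossShift_apply_of_notMem {n j p : ℕ} (h : p < j ∨ j + n < p) :
    crossShift n j p = p := by
  simp only [crossShift, Equiv.Perm.mul_apply, crossPerm_apply]
  split_ifs <;> omega

lemma crossShift_pow_apply_of_mem {n j p : ℕ} (hjp : j ≤ p) (hpj : p ≤ j + n) (k : ℕ) :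
    (crossShift n j ^ k) p = j + (p - j + 2 * k) % (n + 1) := by
  induction k with
  | zero => rw [pow_zero, Equiv.Perm.one_apply, Nat.mod_eq_of_lt (by omega)]; omega
  | succ k ih =>
    have hlt : (p - j + 2 * k) % (n + 1) < n + 1 := Nat.mod_lt _ (by omega)
    rw [pow_succ', Equiv.Perm.mul_apply, ih,
      crossShift_apply_of_mem (Nat.le_add_right _ _) (by omega), Nat.add_sub_cancel_left,
      Nat.mod_add_mod]
    rfl

lemma exists_mem_C_apply_eq_add {n m j r : ℕ} (hn : Even n) (hr : r ≤ n)
    (hj : 1 ≤ j) (hjm : j + n ≤ m) :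
    ∃ g ∈ C n m, g j = j + r ∧ ∀ i < j, g i = i := by
  -- `2` is invertible modulo the odd number `n + 1`
  obtain ⟨k, hk⟩ : ∃ k, 2 * k = r ∨ 2 * k = r + (n + 1) := by
    obtain ⟨h, rfl⟩ := hn
    exact ⟨if r % 2 = 0 then r / 2 else (r + 2 * h + 1) / 2, by split <;> omega⟩
  refine ⟨crossShift n j ^ k, Subgroup.pow_mem _ (crossShift_mem_C hj hjm) k, ?_,
    fun i hi => ?_⟩
  · rw [crossShift_pow_apply_of_mem le_rfl (Nat.le_add_right _ _), Nat.sub_self, zero_add]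
    rcases hk with hk | hk <;> rw [hk] <;> simp [Nat.mod_eq_of_lt (Nat.lt_succ_of_le hr)]
  · exact Equiv.Perm.pow_apply_eq_self_of_apply_eq_self (crossShift_apply_of_notMem (.inl hi)) k

lemma exists_mem_C_apply_eq {n m a N : ℕ} (hn : Even n) (hn0 : 0 < n) (ha : 1 ≤ a)
    (haN : a ≤ N) (hNm : N ≤ m) (ham : a + n ≤ m) :
    ∃ g ∈ C n m, g a = N ∧ ∀ i < a, g i = i := by
  induction h : N - a using Nat.strong_induction_on generalizing a with
  | _ d ih =>
    subst h
    by_cases hN : N ≤ a + n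
    · obtain ⟨g, hg, hga, hgf⟩ := exists_mem_C_apply_eq_add (r := N - a) hn (by omega) ha ham
      exact ⟨g, hg, by omega, hgf⟩
    -- otherwise first move to the farthest `b ≤ a + n` whose window still fits in `{1, …, m}`
    · set b := min (a + n) (m - n) with hb
      obtain ⟨g₁, hg₁, hg₁a, hg₁f⟩ :=
        exists_mem_C_apply_eq_add (r := b - a) hn (by omega) ha ham
      obtain ⟨g₂, hg₂, hg₂b, hg₂f⟩ :=
        ih (N - b) (by omega) (a := b) (by omega) (by omega) (by omega) rfl
      refine ⟨g₂ * g₁, mul_mem hg₂ hg₁, ?_, fun i hi => ?_⟩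
      · rw [Equiv.Perm.mul_apply, hg₁a, show a + (b - a) = b by omega, hg₂b]
      · rw [Equiv.Perm.mul_apply, hg₁f i hi, hg₂f i (by omega)]

lemma List.formPerm_map {α : Type*} [DecidableEq α] (σ : Equiv.Perm α) :
    ∀ l : List α, (l.map σ).formPerm = σ * l.formPerm * σ⁻¹
  | [] => by simp
  | [x] => by simp
  | x :: y :: l => by
    have ih := List.formPerm_map σ (y :: l)
    rw [List.map_cons, List.map_cons, List.formPerm_cons_cons, ← List.map_cons, ih,
      List.formPerm_cons_cons, Equiv.swap_apply_apply]
    group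

theorem stmt1_general (n : ℕ) (hn : Even n) (hn2 : 2 ≤ n)
    (t : ℕ) (ht : 1 ≤ t) (l : ℕ → ℕ)
    (hl : ∀ s < t, l s < l (s + 1))
    (N : ℕ) (hN1 : l t ≤ N) (hN2 : N ≤ l t + 3 * n - 3) :
    ∃ g ∈ C n (l t + 3 * n - 3),
      g * ((List.range t).map
            (fun s => (List.range' (l s + 1) (l (s + 1) - l s)).formPerm)).prod * g⁻¹ =
        ((List.range (t - 1)).map
            (fun s => (List.range' (l s + 1) (l (s + 1) - l s)).formPerm)).prod *
          (List.range' (l (t - 1) + 1) (l t - l (t - 1) - 1) ++ [N]).formPerm := by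
  obtain ⟨t, rfl⟩ : ∃ t', t = t' + 1 := ⟨t - 1, by omega⟩
  simp only [Nat.add_sub_cancel]
  have hmono : StrictMonoOn l (Set.Iic (t + 1)) := strictMonoOn_Iic_of_lt_succ hl
  have hlt : l t < l (t + 1) := hl t (by omega)
  obtain ⟨g, hgC, hgN, hgfix⟩ :=
    exists_mem_C_apply_eq (m := l (t + 1) + 3 * n - 3) hn (by omega) (by omega) hN1 hN2 (by omega)
  have hfix : ∀ L : List ℕ, (∀ i ∈ L, i < l (t + 1)) → L.map g = L := fun L hL =>
    List.map_congr_left (fun i hi => hgfix i (hL i hi)) |>.trans L.map_id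
  refine ⟨g, hgC, ?_⟩
  rw [List.range_succ, List.map_append, List.prod_append, List.map_singleton,
    List.prod_singleton, ← MulAut.conj_apply, map_mul, map_list_prod, List.map_map]
  congr 1
  · refine congrArg List.prod (List.map_congr_left fun s hs => ?_)
    rw [List.mem_range] at hs
    have hst : l (s + 1) ≤ l t :=
      hmono.monotoneOn (Set.mem_Iic.mpr (by omega)) (Set.mem_Iic.mpr (by omega)) (by omega)
    rw [Function.comp_apply, MulAut.conj_apply, ← List.formPerm_map,
      hfix _ fun i hi => by rw [List.mem_range'_1] at hi; omega]
  · rw [MulAut.conj_apply, ← List.formPerm_map,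
      show l (t + 1) - l t = (l (t + 1) - l t - 1) + 1 by omega, List.range'_concat,
      List.map_append, hfix _ fun i hi => by rw [List.mem_range'_1] at hi; omega]
    simp [hgN, show l t + 1 + (l (t + 1) - l t - 1) = l (t + 1) by omega]

theorem stmt1 (n : ℕ) (hn : Even n) (hn2 : 2 ≤ n)
    (t : ℕ) (ht : 1 ≤ t) (l : ℕ → ℕ) (hl0 : l 0 = 0)
    (hl : ∀ s < t, l s < l (s + 1))
    (N : ℕ) (hN1 : l t ≤ N) (hN2 : N ≤ l t + 3 * n - 3) :
    ∃ g ∈ C n (l t + 3 * n - 3),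
      g * ((List.range t).map
            (fun s => (List.range' (l s + 1) (l (s + 1) - l s)).formPerm)).prod * g⁻¹ =
        ((List.range (t - 1)).map
            (fun s => (List.range' (l s + 1) (l (s + 1) - l s)).formPerm)).prod *
          (List.range' (l (t - 1) + 1) (l t - l (t - 1) - 1) ++ [N]).formPerm :=
  stmt1_general n hn hn2 t ht l hl N hN1 hN2
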